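/- Every matrix in the group generated by the F₄ generators M₁ = (1/2)·[[1,−1,1,1],[−1,−1,−1,1],[1,1,−1,1],[1,−1,−1,−1]] and M₂ = (1/2)·[[−1,1,−1,−1],[1,−1,−1,−1],[−1,−1,1,−1],[1,1,1,−1]] has all entries in (1/2)·ℤ, i.e., each entry is a half-integer. -/

import Mathlib

open Matrix

def hvec : Fin 4 → ℚ := fun _ => 1/2

def memL (v : Fin 4 → ℚ) : Prop := ∃ (a : Fin 4 → ℤ) (c : ℤ), ∀ i, v i = a i + c/2

lemma memL_add {v w : Fin 4 → ℚ} (hv : memL v) (hw : memL w) : memL (v + w) := by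
  obtain ⟨a, c, ha⟩ := hv; obtain ⟨b, d, hb⟩ := hw
  exact ⟨a + b, c + d, fun i => by simp only [Pi.add_apply, ha i, hb i]; push_cast; ring⟩

lemma memL_zsmul {v : Fin 4 → ℚ} (k : ℤ) (hv : memL v) : memL ((k : ℚ) • v) := by
  obtain ⟨a, c, ha⟩ := hv
  exact ⟨k • a, k * c, fun i => by simp only [Pi.smul_apply, ha i, smul_eq_mul]; push_cast; ring⟩

def good (A : Matrix (Fin 4) (Fin 4) ℚ) : Prop := ∀ v, memL v → memL (A *ᵥ v)

lemma good_of {A : Matrix (Fin 4) (Fin 4) ℚ}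
    (hcol : ∀ j, memL (A *ᵥ Pi.single j (1:ℚ))) (hh : memL (A *ᵥ hvec)) : good A := by
  intro v hv
  obtain ⟨a, c, ha⟩ := hv
  have hveq : v = (∑ j, (a j : ℚ) • (Pi.single j (1:ℚ) : Fin 4 → ℚ)) + (c : ℚ) • hvec := by
    funext i
    simp only [Pi.add_apply, Finset.sum_apply, Pi.smul_apply, Pi.single_apply, smul_eq_mul,
      mul_ite, mul_one, mul_zero, hvec]
    rw [Finset.sum_ite_eq Finset.univ i fun j => (a j : ℚ)]
    simp [ha i]
    ring
  rw [hveq, mulVec_add, mulVec_smul]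
  refine memL_add ?_ (memL_zsmul c hh)
  have : A *ᵥ (∑ j, (a j : ℚ) • (Pi.single j (1:ℚ) : Fin 4 → ℚ)) = ∑ j, (a j : ℚ) • (A *ᵥ Pi.single j (1:ℚ)) := by
    simp only [← mulVecLin_apply, map_sum, _root_.map_smul]
  rw [this, Fin.sum_univ_four]
  exact memL_add (memL_add (memL_add (memL_zsmul _ (hcol 0)) (memL_zsmul _ (hcol 1)))
    (memL_zsmul _ (hcol 2))) (memL_zsmul _ (hcol 3))

lemma good_mul {A B : Matrix (Fin 4) (Fin 4) ℚ} (hA : good A) (hB : good B) : good (A * B) := by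
  intro v hv
  rw [← mulVec_mulVec]
  exact hA _ (hB v hv)

lemma good_one : good (1 : Matrix (Fin 4) (Fin 4) ℚ) := by
  intro v hv; simpa using hv

def S : Subgroup (GL (Fin 4) ℚ) where
  carrier := {X | good (X : Matrix (Fin 4) (Fin 4) ℚ) ∧
    good ((X⁻¹ : GL (Fin 4) ℚ) : Matrix (Fin 4) (Fin 4) ℚ)}
  one_mem' := by constructor <;> simpa using good_one
  mul_mem' := by
    rintro X Y ⟨hX, hX'⟩ ⟨hY, hY'⟩
    constructor
    · rw [Units.val_mul]; exact good_mul hX hY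
    · rw [_root_.mul_inv_rev, Units.val_mul]; exact good_mul hY' hX'
  inv_mem' := by
    rintro X ⟨hX, hX'⟩
    exact ⟨hX', by rwa [inv_inv]⟩

lemma memL_of_half (v : Fin 4 → ℚ) (h : ∀ i, v i = 1/2 ∨ v i = -1/2) : memL v := by
  refine ⟨fun i => if v i = 1/2 then 0 else -1, 1, fun i => ?_⟩
  rcases h i with h' | h' <;> simp [h'] <;> norm_num

lemma memL_of_int (v : Fin 4 → ℚ) (h : ∀ i, ∃ k : ℤ, v i = k) : memL v := by
  choose a ha using h
  exact ⟨a, 0, fun i => by simp [ha i]⟩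

lemma good_of_half {A : Matrix (Fin 4) (Fin 4) ℚ} (hA : ∀ i j, A i j = 1/2 ∨ A i j = -1/2)
    (hh : memL (A *ᵥ hvec)) : good A := by
  refine good_of (fun j => ?_) hh
  rw [mulVec_single]
  exact memL_of_half _ fun i => by rcases hA i j with h | h <;> simp [h]

set_option maxHeartbeats 1000000 in
theorem stmt_14 (u₁ u₂ : GL (Fin 4) ℚ)
    (h₁ : (u₁ : Matrix (Fin 4) (Fin 4) ℚ) =
      (1 / 2 : ℚ) • !![1, -1, 1, 1; -1, -1, -1, 1; 1, 1, -1, 1; 1, -1, -1, -1])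
    (h₂ : (u₂ : Matrix (Fin 4) (Fin 4) ℚ) =
      (1 / 2 : ℚ) • !![-1, 1, -1, -1; 1, -1, -1, -1; -1, -1, 1, -1; 1, 1, 1, -1])
    (X : GL (Fin 4) ℚ) (hX : X ∈ Subgroup.closure {u₁, u₂}) (i j : Fin 4) :
    ∃ k : ℤ, (X : Matrix (Fin 4) (Fin 4) ℚ) i j = (k : ℚ) / 2 := by
  have hinv₁ : ((u₁⁻¹ : GL (Fin 4) ℚ) : Matrix (Fin 4) (Fin 4) ℚ) =
      (1 / 2 : ℚ) • !![1, -1, 1, 1; -1, -1, 1, -1; 1, -1, -1, -1; 1, 1, 1, -1] := by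
    rw [coe_units_inv, h₁]
    apply inv_eq_right_inv
    ext i j
    fin_cases i <;> fin_cases j <;>
      norm_num [Matrix.mul_apply, Fin.sum_univ_succ, Matrix.one_apply, Fin.ext_iff]
  have hinv₂ : ((u₂⁻¹ : GL (Fin 4) ℚ) : Matrix (Fin 4) (Fin 4) ℚ) =
      (1 / 2 : ℚ) • !![-1, 1, -1, 1; 1, -1, -1, 1; -1, -1, 1, 1; -1, -1, -1, -1] := by
    rw [coe_units_inv, h₂]
    apply inv_eq_right_inv
    ext i j
    fin_cases i <;> fin_cases j <;>
      norm_num [Matrix.mul_apply, Fin.sum_univ_succ, Matrix.one_apply, Fin.ext_iff]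
  have hu₁ : u₁ ∈ S := by
    constructor
    · refine good_of_half (fun i j => ?_) ?_
      · rw [h₁]; fin_cases i <;> fin_cases j <;> norm_num
      · refine memL_of_half _ fun i => ?_
        rw [h₁]; fin_cases i <;> norm_num [mulVec, dotProduct, Fin.sum_univ_succ, hvec]
    · refine good_of_half (fun i j => ?_) ?_
      · rw [hinv₁]; fin_cases i <;> fin_cases j <;> norm_num
      · refine memL_of_half _ fun i => ?_
        rw [hinv₁]; fin_cases i <;> norm_num [mulVec, dotProduct, Fin.sum_univ_succ, hvec]
  have hu₂ : u₂ ∈ S := by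
    constructor
    · refine good_of_half (fun i j => ?_) ?_
      · rw [h₂]; fin_cases i <;> fin_cases j <;> norm_num
      · refine memL_of_half _ fun i => ?_
        rw [h₂]; fin_cases i <;> norm_num [mulVec, dotProduct, Fin.sum_univ_succ, hvec]
    · refine good_of_half (fun i j => ?_) ?_
      · rw [hinv₂]; fin_cases i <;> fin_cases j <;> norm_num
      · refine memL_of_int _ fun i => ?_
        rw [hinv₂]
        fin_cases i <;> [exact ⟨0, by norm_num [mulVec, dotProduct, Fin.sum_univ_succ, hvec]⟩;
          exact ⟨0, by norm_num [mulVec, dotProduct, Fin.sum_univ_succ, hvec]⟩;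
          exact ⟨0, by norm_num [mulVec, dotProduct, Fin.sum_univ_succ, hvec]⟩;
          exact ⟨-1, by norm_num [mulVec, dotProduct, Fin.sum_univ_succ, hvec]⟩]
  have hXS : X ∈ S := (Subgroup.closure_le S).2 (by
    rintro g (rfl | rfl)
    exacts [hu₁, hu₂]) hX
  obtain ⟨hg, -⟩ := hXS
  have hsingle : memL (Pi.single j (1:ℚ)) := by
    refine ⟨fun i => if i = j then 1 else 0, 0, fun i => ?_⟩
    simp only [Pi.single_apply, add_zero, Int.cast_zero]
    split <;> simp
  obtain ⟨a, c, ha⟩ := hg _ hsingle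
  have h3 := ha i
  rw [mulVec_single] at h3
  refine ⟨2 * a i + c, ?_⟩
  simp only [Pi.smul_apply, Matrix.col_apply, op_smul_eq_mul, mul_one] at h3
  rw [h3]
  push_cast
  ring
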